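/- arXiv:2109.07645 — 13 statements merged into one kernel-verified Lean document; each statement's English description precedes it below -/
import Mathlib

section
/- Let A > 0 and B be real numbers with A + B < 0, let r0 ∈ [0,1) with A + B·r0 ≠ 0, and set C = (1 − r0)/(A + B·r0). Then the function r(t) = (e^{(A+B)t} − C·A)/(C·B + e^{(A+B)t}) satisfies lim_{t→∞} r(t) = A/(−B), and A/(−B) ∈ (0,1). -/
/-- In the toy seedbank model, if `A > 0` and `A + B < 0` (seed producers
reproduce more slowly), the explicit solution
`r(t) = (e^{(A+B)t} − C·A)/(C·B + e^{(A+B)t})` with `C = (1 − r0)/(A + B·r0)` tends to the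
interior point `A/(−B) ∈ (0,1)` as `t → ∞`: balancing selection / coexistence. -/
theorem stmt_4 (A B r0 : ℝ) (hA : 0 < A) (hAB : A + B < 0)
    (hr0 : r0 ∈ Set.Ico (0:ℝ) 1) (hden : A + B * r0 ≠ 0) :
    let C := (1 - r0) / (A + B * r0)
    Filter.Tendsto
      (fun t : ℝ =>
        (Real.exp ((A + B) * t) - C * A) / (C * B + Real.exp ((A + B) * t)))
      Filter.atTop (nhds (A / (-B))) ∧
    A / (-B) ∈ Set.Ioo (0:ℝ) 1 := by
  intro C
  have hB : B < 0 := by linarith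
  have hBne : B ≠ 0 := ne_of_lt hB
  have hC : C ≠ 0 := div_ne_zero (by linarith [hr0.2]) hden
  have hexp : Filter.Tendsto (fun t : ℝ => Real.exp ((A + B) * t))
      Filter.atTop (nhds 0) := by
    apply Real.tendsto_exp_atBot.comp
    exact Filter.Tendsto.const_mul_atTop_of_neg hAB Filter.tendsto_id
  constructor
  · have h1 : Filter.Tendsto (fun t : ℝ => Real.exp ((A + B) * t) - C * A)
        Filter.atTop (nhds (0 - C * A)) := hexp.sub_const _
    have h2 : Filter.Tendsto (fun t : ℝ => C * B + Real.exp ((A + B) * t))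
        Filter.atTop (nhds (C * B + 0)) := hexp.const_add _
    have h3 := h1.div h2 (by simp [hC, hBne])
    have key : (0 - C * A) / (C * B + 0) = A / (-B) := by
      rw [zero_sub, add_zero, neg_div, mul_div_mul_left _ _ hC, ← div_neg]
    rw [key] at h3
    exact h3
  · constructor
    · exact div_pos hA (by linarith)
    · rw [div_lt_one (by linarith)]
      linarith
end

section
/- Let B22X, B22Y, B21X, B21Y, B12X, B12Y be real numbers with (B22X − B22Y)·(B12X − B12Y)·(B21Y·B12Y − B21X·B12X) ≠ 0, and set x̂1 = B12X·[(B21Y·B12Y − B21X·B12X) − B12Y·(B22X − B22Y)] / [(B21Y·B12Y − B21X·B12X)·(B12X − B12Y)] and x̂2 = [(B21Y·B12Y − B21X·B12X) − B12Y·(B22X − B22Y)] / [(B22X − B22Y)·(B12X − B12Y)]. Then (0,0), (1,1) and (x̂1, x̂2) are common zeros of f and g, i.e. f(0,0) = g(0,0) = 0, f(1,1) = g(1,1) = 0, and f(x̂1, x̂2) = g(x̂1, x̂2) = 0. -/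
/-- The points `(0,0)`, `(1,1)` and `(x̂1, x̂2)` are common zeros of the
functions `f(x1,x2) = B12X·x2·(1−x1) − B12Y·x1·(1−x2)` and
`g(x1,x2) = (1−x2)·[(B22X−B22Y)·x2 + (B21X−B21Y)·x1] + B21Y·(x1−x2)`, i.e. they are
critical points of the large-population deterministic system. -/
theorem stmt_5 (B22X B22Y B21X B21Y B12X B12Y : ℝ)
    (h : (B22X - B22Y) * (B12X - B12Y) * (B21Y * B12Y - B21X * B12X) ≠ 0) :
    let f : ℝ → ℝ → ℝ := fun x1 x2 => B12X * x2 * (1 - x1) - B12Y * x1 * (1 - x2)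
    let g : ℝ → ℝ → ℝ := fun x1 x2 =>
      (1 - x2) * ((B22X - B22Y) * x2 + (B21X - B21Y) * x1) + B21Y * (x1 - x2)
    let x1h : ℝ := B12X * ((B21Y * B12Y - B21X * B12X) - B12Y * (B22X - B22Y)) /
      ((B21Y * B12Y - B21X * B12X) * (B12X - B12Y))
    let x2h : ℝ := ((B21Y * B12Y - B21X * B12X) - B12Y * (B22X - B22Y)) /
      ((B22X - B22Y) * (B12X - B12Y))
    f 0 0 = 0 ∧ g 0 0 = 0 ∧ f 1 1 = 0 ∧ g 1 1 = 0 ∧ f x1h x2h = 0 ∧ g x1h x2h = 0 := by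
  have h1 : (B22X - B22Y) ≠ 0 := fun e => h (by rw [e]; ring)
  have h2 : (B12X - B12Y) ≠ 0 := fun e => h (by rw [e]; ring)
  have h3 : (B21Y * B12Y - B21X * B12X) ≠ 0 := fun e => h (by rw [e]; ring)
  refine ⟨by ring, by ring, by ring, by ring, ?_, ?_⟩ <;>
    simp only [] <;> field_simp [show B21Y * B12Y - B12X * B21X ≠ 0 by rwa [mul_comm B12X]] <;> ring
end

section
/- Let B22X, B22Y, B21X, B21Y, B12X, B12Y be real numbers with B12X > 0, B12Y > 0 and (B22X − B22Y)·(B12X − B12Y)·(B21Y·B12Y − B21X·B12X) ≠ 0. Then the set of common zeros of f and g in ℝ² is exactly {(0,0), (1,1), (x̂1, x̂2)}, where x̂1 = B12X·[(B21Y·B12Y − B21X·B12X) − B12Y·(B22X − B22Y)] / [(B21Y·B12Y − B21X·B12X)·(B12X − B12Y)] and x̂2 = [(B21Y·B12Y − B21X·B12X) − B12Y·(B22X − B22Y)] / [(B22X − B22Y)·(B12X − B12Y)]. -/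
/-- Under the nondegeneracy condition
`(B22X − B22Y)·(B12X − B12Y)·(B21Y·B12Y − B21X·B12X) ≠ 0` (and positive germination
rates), the set of common zeros in `ℝ²` of
`f(x1,x2) = B12X·x2·(1−x1) − B12Y·x1·(1−x2)` and
`g(x1,x2) = (1−x2)·[(B22X−B22Y)·x2 + (B21X−B21Y)·x1] + B21Y·(x1−x2)` is exactly
`{(0,0), (1,1), (x̂1, x̂2)}`. -/
theorem stmt_6 (B22X B22Y B21X B21Y B12X B12Y : ℝ)
    (hX : 0 < B12X) (hY : 0 < B12Y)
    (h : (B22X - B22Y) * (B12X - B12Y) * (B21Y * B12Y - B21X * B12X) ≠ 0) :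
    let f : ℝ → ℝ → ℝ := fun x1 x2 => B12X * x2 * (1 - x1) - B12Y * x1 * (1 - x2)
    let g : ℝ → ℝ → ℝ := fun x1 x2 =>
      (1 - x2) * ((B22X - B22Y) * x2 + (B21X - B21Y) * x1) + B21Y * (x1 - x2)
    let x1h : ℝ := B12X * ((B21Y * B12Y - B21X * B12X) - B12Y * (B22X - B22Y)) /
      ((B21Y * B12Y - B21X * B12X) * (B12X - B12Y))
    let x2h : ℝ := ((B21Y * B12Y - B21X * B12X) - B12Y * (B22X - B22Y)) /
      ((B22X - B22Y) * (B12X - B12Y))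
    {p : ℝ × ℝ | f p.1 p.2 = 0 ∧ g p.1 p.2 = 0} =
      {((0:ℝ), (0:ℝ)), ((1:ℝ), (1:ℝ)), (x1h, x2h)} := by
  intro f g x1h x2h
  obtain ⟨hAD, hC⟩ := mul_ne_zero_iff.mp h
  obtain ⟨hA, hD⟩ := mul_ne_zero_iff.mp hAD
  ext ⟨a, b⟩
  simp only [Set.mem_setOf_eq, Set.mem_insert_iff, Set.mem_singleton_iff,
    Prod.mk.injEq, f, g, x1h, x2h]
  constructor
  · rintro ⟨hf, hg⟩
    -- denominator B12Y + (B12X - B12Y) * b is nonzero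
    have hden : B12Y + (B12X - B12Y) * b ≠ 0 := by
      intro h0
      have hb : B12X * b = 0 := by linear_combination hf + a * h0
      have hb0 : b = 0 := by
        rcases mul_eq_zero.mp hb with h' | h'
        · exact absurd h' hX.ne'
        · exact h'
      rw [hb0] at h0
      simp at h0
      exact hY.ne' h0
    -- the key cubic identity
    have hcubic : b * (1 - b) * ((B22X - B22Y) * (B12X - B12Y) * b -
        ((B21Y * B12Y - B21X * B12X) - B12Y * (B22X - B22Y))) = 0 := by
      linear_combination (B12Y + (B12X - B12Y) * b) * hg +
        ((1 - b) * (B21X - B21Y) + B21Y) * hf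
    rcases mul_eq_zero.mp hcubic with h1 | h3
    · rcases mul_eq_zero.mp h1 with hb0 | hb1
      · left
        refine ⟨?_, hb0⟩
        have : a * B12Y = 0 := by linear_combination -hf - a * (B12X - B12Y) * hb0 + B12X * hb0
        rcases mul_eq_zero.mp this with h' | h'
        · exact h'
        · exact absurd h' hY.ne'
      · right; left
        have hb : b = 1 := by linarith [sub_eq_zero.mp hb1]
        refine ⟨?_, hb⟩
        have : B12X * (1 - a) = 0 := by linear_combination hf - (B12X*(1-a)+B12Y*a)*hb
        rcases mul_eq_zero.mp this with h' | h'
        · exact absurd h' hX.ne'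
        · linarith [sub_eq_zero.mp h']
    · right; right
      have hE : (B22X - B22Y) * (B12X - B12Y) * b =
          (B21Y * B12Y - B21X * B12X) - B12Y * (B22X - B22Y) :=
        sub_eq_zero.mp h3
      constructor
      · rw [eq_div_iff (mul_ne_zero hC hD)]
        linear_combination ((B22X - B22Y) * (B12X - B12Y)) * (-hf) +
          (B12X - (B12X - B12Y) * a) * hE
      · rw [eq_div_iff (mul_ne_zero hA hD)]
        linear_combination hE
  · rintro (⟨ha, hb⟩ | ⟨ha, hb⟩ | ⟨ha, hb⟩) <;> subst ha <;> subst hb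
    · norm_num
    · norm_num
    · constructor
      · have hC' : B21Y * B12Y - B12X * B21X ≠ 0 := by
          intro h0; exact hC (by linear_combination h0)
        field_simp
        ring
      · field_simp
        ring
end

section
/- Let B22X, B22Y, B21X, B21Y, B12X, B12Y be real numbers with B12X = B12Y, B12X ≠ 0, and B22X − B22Y = −(B21X − B21Y). Then the set of common zeros of f and g in [0,1]² is exactly the diagonal {(x, x) : x ∈ [0,1]}. -/
/-- If `B12X = B12Y ≠ 0` and `B22X − B22Y = −(B21X − B21Y)`, the set of
common zeros in `[0,1]²` of `f(x1,x2) = B12X·x2·(1−x1) − B12Y·x1·(1−x2)` and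
`g(x1,x2) = (1−x2)·[(B22X−B22Y)·x2 + (B21X−B21Y)·x1] + B21Y·(x1−x2)` is exactly the
diagonal `{(x,x) : x ∈ [0,1]}`. -/
theorem stmt_7 (B22X B22Y B21X B21Y B12X B12Y : ℝ)
    (h1 : B12X = B12Y) (h2 : B12X ≠ 0)
    (h3 : B22X - B22Y = -(B21X - B21Y)) :
    let f : ℝ → ℝ → ℝ := fun x1 x2 => B12X * x2 * (1 - x1) - B12Y * x1 * (1 - x2)
    let g : ℝ → ℝ → ℝ := fun x1 x2 =>
      (1 - x2) * ((B22X - B22Y) * x2 + (B21X - B21Y) * x1) + B21Y * (x1 - x2)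
    {p : ℝ × ℝ | p.1 ∈ Set.Icc (0:ℝ) 1 ∧ p.2 ∈ Set.Icc (0:ℝ) 1 ∧
        f p.1 p.2 = 0 ∧ g p.1 p.2 = 0} =
      {p : ℝ × ℝ | ∃ x ∈ Set.Icc (0:ℝ) 1, p = (x, x)} := by
  intro f g
  ext ⟨x1, x2⟩
  simp only [Set.mem_setOf_eq, f, g]
  constructor
  · rintro ⟨hx1, hx2, hf, hg⟩
    have heq : x1 = x2 := by
      have : B12X * (x2 - x1) = 0 := by subst h1; linarith [hf]
      have := (mul_eq_zero.mp this).resolve_left h2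
      linarith
    exact ⟨x1, hx1, by rw [heq]⟩
  · rintro ⟨x, hx, hp⟩
    obtain ⟨rfl, rfl⟩ := Prod.mk.injEq .. ▸ hp
    refine ⟨hx, hx, by rw [h1]; ring, ?_⟩
    have : B21X - B21Y = -(B22X - B22Y) := by linarith
    rw [this]; ring
end

section
/- Let B22X, B22Y, B21X, B21Y, B12X, B12Y be real numbers with B12X > 0 and B12Y > 0, and suppose that either (i) (B22X − B22Y)·(B12X − B12Y) < 0, (B21Y·B12Y − B21X·B12X)·(B12X − B12Y) < 0 and (B21Y·B12Y/B12X − B21X)·(B12X/B12Y) < B22X − B22Y < B21Y·B12Y/B12X − B21X, or (ii) (B22X − B22Y)·(B12X − B12Y) > 0, (B21Y·B12Y − B21X·B12X)·(B12X − B12Y) > 0 and B21Y·B12Y/B12X − B21X < B22X − B22Y < (B12X/B12Y)·(B21Y·B12Y/B12X − B21X). Then the point (x̂1, x̂2) defined by x̂1 = B12X·[(B21Y·B12Y − B21X·B12X) − B12Y·(B22X − B22Y)] / [(B21Y·B12Y − B21X·B12X)·(B12X − B12Y)] and x̂2 = [(B21Y·B12Y − B21X·B12X) − B12Y·(B22X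 − B22Y)] / [(B22X − B22Y)·(B12X − B12Y)] belongs to [0,1]² and is distinct from (0,0) and (1,1). -/
lemma stmt8_aux (n d : ℝ) (h1 : 0 < n * d) (h2 : n * d < d * d) :
    0 < n / d ∧ n / d < 1 := by
  have hd : d ≠ 0 := by
    rintro rfl
    simp at h1
  have hdd : 0 < d * d := mul_self_pos.mpr hd
  have e : n / d = (n * d) / (d * d) := by
    rw [mul_comm n d, mul_comm d d, mul_div_mul_left _ _ hd]
  rw [e]
  exact ⟨div_pos h1 hdd, (div_lt_one hdd).mpr h2⟩

/-- Under Condition 1(i) or 1(ii) of the paper, the nontrivial critical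
point `(x̂1, x̂2)` of the large-population deterministic system belongs to `[0,1]²` and
differs from `(0,0)` and `(1,1)` (balancing-selection equilibrium). -/
theorem stmt_8 (B22X B22Y B21X B21Y B12X B12Y : ℝ)
    (hX : 0 < B12X) (hY : 0 < B12Y)
    (hcond :
      ((B22X - B22Y) * (B12X - B12Y) < 0 ∧
        (B21Y * B12Y - B21X * B12X) * (B12X - B12Y) < 0 ∧
        (B21Y * B12Y / B12X - B21X) * (B12X / B12Y) < B22X - B22Y ∧
        B22X - B22Y < B21Y * B12Y / B12X - B21X) ∨
      ((B22X - B22Y) * (B12X - B12Y) > 0 ∧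
        (B21Y * B12Y - B21X * B12X) * (B12X - B12Y) > 0 ∧
        B21Y * B12Y / B12X - B21X < B22X - B22Y ∧
        B22X - B22Y < (B12X / B12Y) * (B21Y * B12Y / B12X - B21X))) :
    let x1h : ℝ := B12X * ((B21Y * B12Y - B21X * B12X) - B12Y * (B22X - B22Y)) /
      ((B21Y * B12Y - B21X * B12X) * (B12X - B12Y))
    let x2h : ℝ := ((B21Y * B12Y - B21X * B12X) - B12Y * (B22X - B22Y)) /
      ((B22X - B22Y) * (B12X - B12Y))
    x1h ∈ Set.Icc (0:ℝ) 1 ∧ x2h ∈ Set.Icc (0:ℝ) 1 ∧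
      (x1h, x2h) ≠ ((0:ℝ), (0:ℝ)) ∧ (x1h, x2h) ≠ ((1:ℝ), (1:ℝ)) := by
  intro x1h x2h
  set A : ℝ := B22X - B22Y with hA
  set C : ℝ := B21Y * B12Y - B21X * B12X with hC
  have hX' : B12X ≠ 0 := ne_of_gt hX
  have hY' : B12Y ≠ 0 := ne_of_gt hY
  -- key polynomial inequalities in both cases
  have key : (0 < B12X * (C - B12Y * A) * (C * (B12X - B12Y)) ∧
      B12X * (C - B12Y * A) * (C * (B12X - B12Y)) < (C * (B12X - B12Y)) * (C * (B12X - B12Y))) ∧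
      (0 < (C - B12Y * A) * (A * (B12X - B12Y)) ∧
      (C - B12Y * A) * (A * (B12X - B12Y)) < (A * (B12X - B12Y)) * (A * (B12X - B12Y))) := by
    rcases hcond with ⟨hAD, hCD, h3, h4⟩ | ⟨hAD, hCD, h3, h4⟩
    · -- case (i): C < A * B12Y and A * B12X < C
      have h3' : C < A * B12Y := by
        have := mul_lt_mul_of_pos_right h3 hY
        have e : (B21Y * B12Y / B12X - B21X) * (B12X / B12Y) * B12Y = C := by
          field_simp
          rw [hC]; ring
        rw [e] at this
        exact this
      have h4' : A * B12X < C := by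
        have := mul_lt_mul_of_pos_right h4 hX
        have e : (B21Y * B12Y / B12X - B21X) * B12X = C := by
          field_simp
          rw [hC]; ring
        rw [e] at this
        exact this
      refine ⟨⟨?_, ?_⟩, ?_, ?_⟩
      · nlinarith [mul_pos (mul_pos hX (show (0:ℝ) < A * B12Y - C by linarith))
          (show (0:ℝ) < -(C * (B12X - B12Y)) by linarith)]
      · nlinarith [mul_pos (show (0:ℝ) < -(C * (B12X - B12Y)) by linarith)
          (mul_pos hY (show (0:ℝ) < C - A * B12X by linarith))]
      · nlinarith [mul_pos (show (0:ℝ) < A * B12Y - C by linarith)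
          (show (0:ℝ) < -(A * (B12X - B12Y)) by linarith)]
      · nlinarith [mul_pos (show (0:ℝ) < -(A * (B12X - B12Y)) by linarith)
          (show (0:ℝ) < C - A * B12X by linarith)]
    · -- case (ii): A * B12Y < C and C < A * B12X
      have h3' : C < A * B12X := by
        have := mul_lt_mul_of_pos_right h3 hX
        have e : (B21Y * B12Y / B12X - B21X) * B12X = C := by
          field_simp
          rw [hC]; ring
        rw [e] at this
        exact this
      have h4' : A * B12Y < C := by
        have := mul_lt_mul_of_pos_right h4 hY
        have e : (B12X / B12Y) * (B21Y * B12Y / B12X - B21X) * B12Y = C := by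
          field_simp
          rw [hC]; ring
        rw [e] at this
        exact this
      refine ⟨⟨?_, ?_⟩, ?_, ?_⟩
      · nlinarith [mul_pos (mul_pos hX (show (0:ℝ) < C - A * B12Y by linarith)) hCD]
      · nlinarith [mul_pos hCD (mul_pos hY (show (0:ℝ) < A * B12X - C by linarith))]
      · nlinarith [mul_pos (show (0:ℝ) < C - A * B12Y by linarith) hAD]
      · nlinarith [mul_pos hAD (show (0:ℝ) < A * B12X - C by linarith)]
  obtain ⟨⟨k1, k2⟩, k3, k4⟩ := key
  have hx1 : 0 < x1h ∧ x1h < 1 := by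
    have : x1h = (B12X * (C - B12Y * A)) / (C * (B12X - B12Y)) := by
      simp only [x1h]
      rfl
    rw [this]
    exact stmt8_aux _ _ k1 k2
  have hx2 : 0 < x2h ∧ x2h < 1 := by
    have : x2h = (C - B12Y * A) / (A * (B12X - B12Y)) := by
      simp only [x2h]
      rfl
    rw [this]
    exact stmt8_aux _ _ k3 k4
  refine ⟨⟨le_of_lt hx1.1, le_of_lt hx1.2⟩, ⟨le_of_lt hx2.1, le_of_lt hx2.2⟩, ?_, ?_⟩
  · intro h
    exact (ne_of_gt hx1.1) (congrArg Prod.fst h)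
  · intro h
    exact (ne_of_lt hx1.2) (congrArg Prod.fst h)
end

section
/- Let B22X, B22Y, B21X, B21Y, B12X, B12Y be real numbers with B12X > 0, and suppose that (a) (B22X − B22Y) + B12X + B21X > 0 and (b) (B22X − B22Y) + B21X − (B12Y/B12X)·B21Y > 0. Then every complex root λ of the characteristic polynomial of the real 2×2 matrix J(1,1) = [[−B12X, B12Y], [B21Y, −(B22X − B22Y) − B21X]] satisfies Re(λ) < 0. -/
open Polynomial ComplexConjugate

/-!
The characteristic polynomial of a real `2 × 2` matrix is `X² - (tr J) X + det J`. If `z` is a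
root, multiplying by `z̄` and taking real parts gives `Re z · (|z|² + det J) = tr J · |z|²`, so
`tr J < 0 < det J` forces `Re z < 0`. For the Jacobian at `(1,1)`, hypothesis (a) is `tr J < 0`
and hypothesis (b) is `det J / B12X > 0`.
-/

theorem Complex.re_neg_of_sq_sub_mul_add_eq_zero {t d : ℝ} (ht : t < 0) (hd : 0 < d) {z : ℂ}
    (hz : z ^ 2 - t * z + d = 0) : z.re < 0 := by
  have hz0 : z ≠ 0 := by
    rintro rfl
    simp [hd.ne'] at hz
  have hconj : (z ^ 2 - t * z + d) * conj z = z * normSq z - t * normSq z + d * conj z := by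
    rw [← Complex.mul_conj]
    ring
  have key : z.re * (normSq z + d) = t * normSq z := by
    have := congrArg Complex.re hconj
    rw [hz, zero_mul] at this
    simp only [Complex.zero_re, Complex.add_re, Complex.sub_re, Complex.re_mul_ofReal,
      Complex.re_ofReal_mul, Complex.ofReal_re, Complex.conj_re] at this
    linarith
  have hn : 0 < normSq z := Complex.normSq_pos.mpr hz0
  nlinarith

theorem Matrix.re_neg_of_isRoot_charpoly_of_trace_neg_of_det_pos
    {A : Matrix (Fin 2) (Fin 2) ℝ} (htr : A.trace < 0) (hdet : 0 < A.det) {z : ℂ}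
    (hz : (A.charpoly.map (algebraMap ℝ ℂ)).IsRoot z) : z.re < 0 := by
  refine Complex.re_neg_of_sq_sub_mul_add_eq_zero htr hdet ?_
  simpa [A.charpoly_fin_two, Complex.coe_algebraMap] using hz

/-- Stability of the fixation point `(1,1)` of type-x individuals: if
`(B22X − B22Y) + B12X + B21X > 0` and `(B22X − B22Y) + B21X − (B12Y/B12X)·B21Y > 0`,
every complex root of the characteristic polynomial of the Jacobian
`J(1,1) = [[−B12X, B12Y], [B21Y, −(B22X − B22Y) − B21X]]` has negative real part. -/
theorem stmt_9 (B22X B22Y B21X B21Y B12X B12Y : ℝ) (hX : 0 < B12X)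
    (ha : 0 < (B22X - B22Y) + B12X + B21X)
    (hb : 0 < (B22X - B22Y) + B21X - (B12Y / B12X) * B21Y) :
    ∀ lam : ℂ,
      (((!![-B12X, B12Y; B21Y, -(B22X - B22Y) - B21X] :
          Matrix (Fin 2) (Fin 2) ℝ).charpoly).map (algebraMap ℝ ℂ)).IsRoot lam →
      lam.re < 0 := by
  intro lam hroot
  refine Matrix.re_neg_of_isRoot_charpoly_of_trace_neg_of_det_pos ?_ ?_ hroot
  · rw [Matrix.trace_fin_two_of]
    linarith
  · have hdet : B12X * ((B22X - B22Y) + B21X - (B12Y / B12X) * B21Y)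
        = (-B12X) * (-(B22X - B22Y) - B21X) - B12Y * B21Y := by
      field_simp
      ring
    rw [Matrix.det_fin_two_of, ← hdet]
    exact mul_pos hX hb
end

section
/- Let B22X, B22Y, B21X, B21Y, B12X, B12Y be real numbers and consider the real 2×2 matrix J(1,1) = [[−B12X, B12Y], [B21Y, −(B22X − B22Y) − B21X]]. If either (a) (B22X − B22Y) + B12X + B21X < 0, or (b) B12X > 0 and (B22X − B22Y) + B21X − (B12Y/B12X)·B21Y < 0, then the characteristic polynomial of J(1,1) has a complex root λ with Re(λ) > 0. -/
open Polynomial in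
lemma root_charpoly_aux (a b c e : ℝ) (lam : ℂ)
    (hroot : lam ^ 2 - (↑(a + e)) * lam + ↑(a * e - b * c) = 0) :
    (((!![a, b; c, e] : Matrix (Fin 2) (Fin 2) ℝ).charpoly).map (algebraMap ℝ ℂ)).IsRoot lam := by
  have hcp : (!![a, b; c, e] : Matrix (Fin 2) (Fin 2) ℝ).charpoly
      = X ^ 2 - C (a + e) * X + C (a * e - b * c) := by
    rw [Matrix.charpoly, Matrix.det_fin_two]
    simp
    ring
  rw [hcp]
  simp [Polynomial.IsRoot]
  convert hroot using 2 <;> simp [Complex.ofReal_add, Complex.ofReal_mul]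

lemma main_aux (a b c e : ℝ) (h : 0 < a + e ∨ a * e - b * c < 0) :
    ∃ lam : ℂ,
      (((!![a, b; c, e] : Matrix (Fin 2) (Fin 2) ℝ).charpoly).map (algebraMap ℝ ℂ)).IsRoot lam ∧
      0 < lam.re := by
  set D : ℝ := (a + e) ^ 2 - 4 * (a * e - b * c) with hD
  have real_case : 0 ≤ D → 0 < (a + e) + Real.sqrt D →
      ∃ lam : ℂ,
        (((!![a, b; c, e] : Matrix (Fin 2) (Fin 2) ℝ).charpoly).map (algebraMap ℝ ℂ)).IsRoot lam ∧
        0 < lam.re := by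
    intro hDnn hpos
    refine ⟨((((a + e) + Real.sqrt D) / 2 : ℝ) : ℂ), ?_, by simpa using half_pos hpos⟩
    apply root_charpoly_aux
    have hsR : Real.sqrt D ^ 2 = (a + e) ^ 2 - 4 * (a * e - b * c) := by
      rw [Real.sq_sqrt hDnn]
    have hs : ((Real.sqrt D : ℝ) : ℂ) ^ 2
        = ((a : ℂ) + e) ^ 2 - 4 * ((a : ℂ) * e - b * c) := by
      exact_mod_cast congrArg (fun x : ℝ => (x : ℂ)) hsR
    push_cast
    linear_combination (1 / 4 : ℂ) * hs
  rcases h with h1 | hdneg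
  · rcases le_or_gt 0 D with hDnn | hDneg
    · exact real_case hDnn (by positivity)
    · refine ⟨(((a + e) / 2 : ℝ) : ℂ) + ((Real.sqrt (-D) / 2 : ℝ) : ℂ) * Complex.I, ?_, ?_⟩
      · apply root_charpoly_aux
        have hsR : Real.sqrt (-D) ^ 2 = -((a + e) ^ 2 - 4 * (a * e - b * c)) := by
          rw [Real.sq_sqrt (neg_nonneg.mpr hDneg.le)]
        have hs : ((Real.sqrt (-D) : ℝ) : ℂ) ^ 2
            = -(((a : ℂ) + e) ^ 2 - 4 * ((a : ℂ) * e - b * c)) := by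
          exact_mod_cast congrArg (fun x : ℝ => (x : ℂ)) hsR
        push_cast
        linear_combination (-1 / 4 : ℂ) * hs
          + (((Real.sqrt (-D) : ℝ) : ℂ) ^ 2 / 4) * Complex.I_sq
      · simpa using half_pos h1
  · have hDpos : 0 < D := by nlinarith [sq_nonneg (a + e)]
    have hs : Real.sqrt D ^ 2 = D := Real.sq_sqrt hDpos.le
    have hpos : 0 < (a + e) + Real.sqrt D := by
      nlinarith [Real.sqrt_nonneg D]
    exact real_case hDpos.le hpos

/-- Instability of the fixation point `(1,1)` of type-x individuals: if
`(B22X − B22Y) + B12X + B21X < 0`, or `B12X > 0` and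
`(B22X − B22Y) + B21X − (B12Y/B12X)·B21Y < 0`, the characteristic polynomial of the
Jacobian `J(1,1) = [[−B12X, B12Y], [B21Y, −(B22X − B22Y) − B21X]]` has a complex root
with positive real part. -/
theorem stmt_10 (B22X B22Y B21X B21Y B12X B12Y : ℝ)
    (h : (B22X - B22Y) + B12X + B21X < 0 ∨
      (0 < B12X ∧ (B22X - B22Y) + B21X - (B12Y / B12X) * B21Y < 0)) :
    ∃ lam : ℂ,
      (((!![-B12X, B12Y; B21Y, -(B22X - B22Y) - B21X] :
          Matrix (Fin 2) (Fin 2) ℝ).charpoly).map (algebraMap ℝ ℂ)).IsRoot lam ∧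
      0 < lam.re := by
  apply main_aux
  rcases h with h1 | ⟨hB, h2⟩
  · left; linarith
  · right
    have key : B12X * ((B22X - B22Y) + B21X - (B12Y / B12X) * B21Y)
        = (-B12X) * (-(B22X - B22Y) - B21X) - B12Y * B21Y := by
      field_simp
      ring
    have := mul_neg_of_pos_of_neg hB h2
    linarith [key ▸ this]
end

section
/- Let B22X, B22Y, B21X, B21Y, B12X, B12Y be real numbers with B12Y > 0, and suppose that (a) (B22X − B22Y) − (B21Y + B12Y) < 0 and (b) (B22X − B22Y) + (B12X/B12Y)·B21X − B21Y < 0. Then every complex root λ of the characteristic polynomial of the real 2×2 matrix J(0,0) = [[−B12Y, B12X], [B21X, (B22X − B22Y) − B21Y]] satisfies Re(λ) < 0. -/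
/-- Stability of the fixation point `(0,0)` of type-y individuals: if
`(B22X − B22Y) − (B21Y + B12Y) < 0` and `(B22X − B22Y) + (B12X/B12Y)·B21X − B21Y < 0`,
every complex root of the characteristic polynomial of the Jacobian
`J(0,0) = [[−B12Y, B12X], [B21X, (B22X − B22Y) − B21Y]]` has negative real part. -/
theorem stmt_11 (B22X B22Y B21X B21Y B12X B12Y : ℝ) (hY : 0 < B12Y)
    (ha : (B22X - B22Y) - (B21Y + B12Y) < 0)
    (hb : (B22X - B22Y) + (B12X / B12Y) * B21X - B21Y < 0) :
    ∀ lam : ℂ,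
      (((!![-B12Y, B12X; B21X, (B22X - B22Y) - B21Y] :
          Matrix (Fin 2) (Fin 2) ℝ).charpoly).map (algebraMap ℝ ℂ)).IsRoot lam →
      lam.re < 0 := by
  intro lam hroot
  set M : Matrix (Fin 2) (Fin 2) ℝ := !![-B12Y, B12X; B21X, (B22X - B22Y) - B21Y]
  set T : ℝ := -B12Y + ((B22X - B22Y) - B21Y) with hT
  set D : ℝ := (-B12Y) * ((B22X - B22Y) - B21Y) - B12X * B21X with hD
  have htr : M.trace = T := by simp [M, Matrix.trace_fin_two_of, hT]
  have hdet : M.det = D := by simp [M, Matrix.det_fin_two_of, hD]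
  have hcp : M.charpoly = Polynomial.X ^ 2 - Polynomial.C T * Polynomial.X
      + Polynomial.C D := by
    rw [Matrix.charpoly, Matrix.det_fin_two]
    simp only [Matrix.charmatrix_apply_eq, Matrix.charmatrix_apply_ne _ (0 : Fin 2) 1 (by decide),
      Matrix.charmatrix_apply_ne _ (1 : Fin 2) 0 (by decide)]
    have h00 : M 0 0 = -B12Y := rfl
    have h01 : M 0 1 = B12X := rfl
    have h10 : M 1 0 = B21X := rfl
    have h11 : M 1 1 = (B22X - B22Y) - B21Y := rfl
    rw [h00, h01, h10, h11, hT, hD]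
    simp only [map_add, map_sub, map_mul, map_neg]
    ring
  have heq : lam ^ 2 - (T : ℂ) * lam + (D : ℂ) = 0 := by
    have := hroot
    rw [hcp] at this
    simpa [Polynomial.IsRoot, Polynomial.eval_map, Polynomial.eval₂_add,
      Polynomial.eval₂_sub, Polynomial.eval₂_mul, Polynomial.eval₂_pow] using this
  have hTneg : T < 0 := by rw [hT]; linarith
  have hDpos : 0 < D := by
    have hb' : B12Y * ((B22X - B22Y) + (B12X / B12Y) * B21X - B21Y) < 0 :=
      mul_neg_of_pos_of_neg hY hb
    have : B12Y * ((B22X - B22Y) - B21Y) + B12X * B21X < 0 := by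
      field_simp at hb'
      nlinarith [hb']
    rw [hD]; nlinarith
  set x := lam.re
  set y := lam.im
  have hre : x ^ 2 - y ^ 2 - T * x + D = 0 := by
    have := congrArg Complex.re heq
    simpa [pow_two, Complex.mul_re, Complex.mul_im, x, y, mul_comm] using this
  have him : 2 * x * y - T * y = 0 := by
    have := congrArg Complex.im heq
    simp [pow_two, Complex.mul_re, Complex.mul_im, x, y] at this
    linarith
  by_contra h
  push_neg at h
  have hy : y = 0 := by
    have h2 : 2 * x - T > 0 := by linarith
    have : y * (2 * x - T) = 0 := by ring_nf; ring_nf at him; linarith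
    rcases mul_eq_zero.mp this with h' | h'
    · exact h'
    · linarith
  rw [hy] at hre
  nlinarith [hre, mul_nonneg h (neg_nonneg.mpr hTneg.le)]
end

section
/- Let B22X, B22Y, B21X, B21Y, B12X, B12Y be real numbers and consider the real 2×2 matrix J(0,0) = [[−B12Y, B12X], [B21X, (B22X − B22Y) − B21Y]]. If either (a) (B22X − B22Y) − (B21Y + B12Y) > 0, or (b) B12Y > 0 and (B22X − B22Y) + (B12X/B12Y)·B21X − B21Y > 0, then the characteristic polynomial of J(0,0) has a complex root λ with Re(λ) > 0. -/
lemma key_root (t d : ℝ) (h : 0 < t ∨ d < 0) :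
    ∃ lam : ℂ, lam ^ 2 - (t : ℂ) * lam + (d : ℂ) = 0 ∧ 0 < lam.re := by
  rcases le_or_gt 0 (t ^ 2 - 4 * d) with hd | hd
  · set s : ℝ := Real.sqrt (t ^ 2 - 4 * d) with hsdef
    have hs : s ^ 2 = t ^ 2 - 4 * d := Real.sq_sqrt hd
    have hs0 : 0 ≤ s := Real.sqrt_nonneg _
    refine ⟨(((t + s) / 2 : ℝ) : ℂ), ?_, ?_⟩
    · have hsC : (s : ℂ) ^ 2 = (t : ℂ) ^ 2 - 4 * (d : ℂ) := by exact_mod_cast hs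
      push_cast
      linear_combination hsC / 4
    · simp only [Complex.ofReal_re]
      rcases h with ht | hdneg
      · positivity
      · nlinarith [hs, hs0, hdneg]
  · have ht : 0 < t := by
      rcases h with ht | hdneg
      · exact ht
      · nlinarith
    set s : ℝ := Real.sqrt (4 * d - t ^ 2) with hsdef
    have hs : s ^ 2 = 4 * d - t ^ 2 := Real.sq_sqrt (by linarith)
    refine ⟨((t / 2 : ℝ) : ℂ) + ((s / 2 : ℝ) : ℂ) * Complex.I, ?_, ?_⟩
    · have hsC : (s : ℂ) ^ 2 = 4 * (d : ℂ) - (t : ℂ) ^ 2 := by exact_mod_cast hs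
      have hI : (Complex.I) ^ 2 = -1 := Complex.I_sq
      push_cast
      linear_combination (Complex.I ^ 2 / 4) * hsC + ((4 * (d : ℂ) - (t : ℂ) ^ 2) / 4) * hI
    · simp [ht, half_pos]

/-- Instability of the fixation point `(0,0)` of type-y individuals: if
`(B22X − B22Y) − (B21Y + B12Y) > 0`, or `B12Y > 0` and
`(B22X − B22Y) + (B12X/B12Y)·B21X − B21Y > 0`, the characteristic polynomial of the
Jacobian `J(0,0) = [[−B12Y, B12X], [B21X, (B22X − B22Y) − B21Y]]` has a complex root
with positive real part. -/
theorem stmt_12 (B22X B22Y B21X B21Y B12X B12Y : ℝ)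
    (h : 0 < (B22X - B22Y) - (B21Y + B12Y) ∨
      (0 < B12Y ∧ 0 < (B22X - B22Y) + (B12X / B12Y) * B21X - B21Y)) :
    ∃ lam : ℂ,
      (((!![-B12Y, B12X; B21X, (B22X - B22Y) - B21Y] :
          Matrix (Fin 2) (Fin 2) ℝ).charpoly).map (algebraMap ℝ ℂ)).IsRoot lam ∧
      0 < lam.re := by
  set M : Matrix (Fin 2) (Fin 2) ℝ := !![-B12Y, B12X; B21X, (B22X - B22Y) - B21Y] with hM
  have htr : M.trace = -B12Y + ((B22X - B22Y) - B21Y) := by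
    simp [hM, Matrix.trace_fin_two_of]
  have hdet : M.det = -B12Y * ((B22X - B22Y) - B21Y) - B12X * B21X := by
    simp [hM, Matrix.det_fin_two_of]
  set t : ℝ := -B12Y + ((B22X - B22Y) - B21Y) with htdef
  set d : ℝ := -B12Y * ((B22X - B22Y) - B21Y) - B12X * B21X with hddef
  have hkey : 0 < t ∨ d < 0 := by
    rcases h with ha | ⟨hb1, hb2⟩
    · left; rw [htdef]; linarith
    · right
      rw [hddef]
      have h3 : 0 < B12Y * ((B22X - B22Y) + (B12X / B12Y) * B21X - B21Y) :=
        mul_pos hb1 hb2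
      have h4 : B12Y * ((B22X - B22Y) + (B12X / B12Y) * B21X - B21Y)
          = B12Y * ((B22X - B22Y) - B21Y) + B12X * B21X := by
        field_simp
        ring
      nlinarith [h3, h4]
  obtain ⟨lam, hroot, hre⟩ := key_root t d hkey
  refine ⟨lam, ?_, hre⟩
  have hcp : M.charpoly = Polynomial.X ^ 2 - Polynomial.C t * Polynomial.X
      + Polynomial.C d := by
    rw [Matrix.charpoly, Matrix.det_fin_two]
    rw [Matrix.charmatrix_apply_eq, Matrix.charmatrix_apply_eq,
      Matrix.charmatrix_apply_ne _ _ _ (by decide), Matrix.charmatrix_apply_ne _ _ _ (by decide)]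
    simp only [hM, Matrix.of_apply, Matrix.cons_val', Matrix.cons_val_zero, Matrix.cons_val_one,
      Matrix.head_cons, Matrix.empty_val', Matrix.cons_val_fin_one, Matrix.head_fin_const]
    rw [htdef, hddef]
    simp only [map_add, map_sub, map_mul, map_neg]
    ring
  rw [hcp]
  simp only [Polynomial.IsRoot, Polynomial.eval_map, Polynomial.eval₂_add,
    Polynomial.eval₂_sub, Polynomial.eval₂_mul, Polynomial.eval₂_pow,
    Polynomial.eval₂_X, Polynomial.eval₂_C]
  have h1 : (algebraMap ℝ ℂ) t = (t : ℂ) := rfl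
  have h2 : (algebraMap ℝ ℂ) d = (d : ℂ) := rfl
  rw [h1, h2]
  linear_combination hroot
end

section
/- Let B22X, B22Y, B21X, B21Y, B12X, B12Y be real numbers with B12X > B12Y > 0, B22X < B22Y and B21Y ≥ 0. Set Ā = (B12Y/B12X)·(B21Y − B22X + B22Y) and B̄ = −B22X + B22Y + (B12Y/B12X)·B21Y. Then Ā < B̄, and if Ā < B21X < B̄, the following three inequalities hold: (1) (B22X − B22Y)·(B12X − B12Y) < 0; (2) (B12Y·B21Y − B12X·B21X)·(B12X − B12Y) < 0; (3) (B21Y·B12Y/B12X − B21X)·(B12X/B12Y) < B22X − B22Y < B21Y·B12Y/B12X − B21X. -/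
/-- Case (i) of the balancing-selection analysis: with `B12X > B12Y > 0`,
`B22X < B22Y` and `B21Y ≥ 0`, the thresholds satisfy `Ā < B̄`, and whenever the
seed-production rate satisfies `Ā < B21X < B̄`, Condition 1(i) of the paper holds. -/
theorem stmt_14 (B22X B22Y B21X B21Y B12X B12Y : ℝ)
    (h1 : 0 < B12Y) (h2 : B12Y < B12X) (h3 : B22X < B22Y) (h4 : 0 ≤ B21Y) :
    let Abar : ℝ := (B12Y / B12X) * (B21Y - B22X + B22Y)
    let Bbar : ℝ := -B22X + B22Y + (B12Y / B12X) * B21Y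
    Abar < Bbar ∧
    (Abar < B21X → B21X < Bbar →
      (B22X - B22Y) * (B12X - B12Y) < 0 ∧
      (B12Y * B21Y - B12X * B21X) * (B12X - B12Y) < 0 ∧
      ((B21Y * B12Y / B12X - B21X) * (B12X / B12Y) < B22X - B22Y ∧
        B22X - B22Y < B21Y * B12Y / B12X - B21X)) := by
  intro Abar Bbar
  have hx : (0:ℝ) < B12X := lt_trans h1 h2
  have hr : B12Y / B12X < 1 := (div_lt_one hx).mpr h2
  have hr0 : 0 < B12Y / B12X := div_pos h1 hx
  constructor
  · show (B12Y / B12X) * (B21Y - B22X + B22Y) < -B22X + B22Y + (B12Y / B12X) * B21Y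
    nlinarith [mul_pos hr0 (sub_pos.mpr h3)]
  · intro hA hB
    have hA' : (B12Y / B12X) * (B21Y - B22X + B22Y) < B21X := hA
    have hB' : B21X < -B22X + B22Y + (B12Y / B12X) * B21Y := hB
    have key : B12Y * (B21Y - B22X + B22Y) < B12X * B21X := by
      have h := mul_lt_mul_of_pos_right hA' hx
      have e : B12Y / B12X * (B21Y - B22X + B22Y) * B12X
          = B12Y * (B21Y - B22X + B22Y) := by field_simp
      rw [e] at h
      nlinarith
    refine ⟨by nlinarith, by nlinarith [mul_pos h1 (sub_pos.mpr h3)], ?_, ?_⟩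
    · have e3 : (B21Y * B12Y / B12X - B21X) * (B12X / B12Y)
          = (B21Y * B12Y - B21X * B12X) / B12Y := by field_simp
      rw [e3, div_lt_iff₀ h1]
      nlinarith
    · have e4 : B12Y / B12X * B21Y = B21Y * B12Y / B12X := by ring
      linarith [hB', e4.le, e4.ge]
end

section
/- Let B22X, B22Y, B21X, B21Y, B12X, B12Y be real numbers with B12Y > B12X > 0, B22X < B22Y and B21Y ≥ 0. Set Ā = (B12Y/B12X)·(B21Y − B22X + B22Y) and B̄ = −B22X + B22Y + (B12Y/B12X)·B21Y. Then B̄ < Ā, and if B̄ < B21X < Ā, the following three inequalities hold: (1) (B22X − B22Y)·(B12X − B12Y) > 0; (2) (B21Y·B12Y − B21X·B12X)·(B12X − B12Y) > 0; (3) B21Y·B12Y/B12X − B21X < B22X − B22Y < (B12X/B12Y)·(B21Y·B12Y/B12X − B21X). -/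
/-- Case (ii) of the balancing-selection analysis: with `B12Y > B12X > 0`,
`B22X < B22Y` and `B21Y ≥ 0`, the thresholds satisfy `B̄ < Ā`, and whenever the
seed-production rate satisfies `B̄ < B21X < Ā`, Condition 1(ii) of the paper holds. -/
theorem stmt_15 (B22X B22Y B21X B21Y B12X B12Y : ℝ)
    (h1 : 0 < B12X) (h2 : B12X < B12Y) (h3 : B22X < B22Y) (h4 : 0 ≤ B21Y) :
    let Abar : ℝ := (B12Y / B12X) * (B21Y - B22X + B22Y)
    let Bbar : ℝ := -B22X + B22Y + (B12Y / B12X) * B21Y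
    Bbar < Abar ∧
    (Bbar < B21X → B21X < Abar →
      (B22X - B22Y) * (B12X - B12Y) > 0 ∧
      (B21Y * B12Y - B21X * B12X) * (B12X - B12Y) > 0 ∧
      (B21Y * B12Y / B12X - B21X < B22X - B22Y ∧
        B22X - B22Y < (B12X / B12Y) * (B21Y * B12Y / B12X - B21X))) := by
  intro Abar Bbar
  have h0 : (0:ℝ) < B12Y := lt_trans h1 h2
  have hr : (1:ℝ) < B12Y / B12X := (one_lt_div h1).mpr h2
  have hc : B12Y / B12X * B12X = B12Y := div_mul_cancel₀ _ (ne_of_gt h1)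
  constructor
  · show -B22X + B22Y + (B12Y / B12X) * B21Y < (B12Y / B12X) * (B21Y - B22X + B22Y)
    nlinarith [mul_lt_mul_of_pos_left h3 (lt_trans zero_lt_one hr)]
  · intro hB hA
    simp only [Bbar, Abar] at hB hA
    have hB' : (-B22X + B22Y) * B12X + B12Y * B21Y < B21X * B12X := by
      nlinarith [mul_lt_mul_of_pos_right hB h1]
    have hA' : B21X * B12X < B12Y * (B21Y - B22X + B22Y) := by
      nlinarith [mul_lt_mul_of_pos_right hA h1]
    refine ⟨by nlinarith, by nlinarith, ?_, ?_⟩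
    · rw [sub_lt_iff_lt_add, div_lt_iff₀ h1]
      nlinarith
    · have hrw : (B12X / B12Y) * (B21Y * B12Y / B12X - B21X)
          = (B21Y * B12Y - B21X * B12X) / B12Y := by
        field_simp
      rw [hrw, lt_div_iff₀ h0]
      nlinarith
end

section
/- Let B11X, B11Y, c1X, c1Y, c2X, c2Y, B22X, B22Y be real numbers, let B12X, B12Y, B21X, B21Y, β1X, β1Y, β2X, β2Y be nonnegative real numbers, and let z1, z2 > 0. Define, for (x1,x2) ∈ ℝ², b1(x1,x2) = (B11X − B11Y)·x1·(1−x1)·1{x1∈[0,1]} + B12X·(z2/z1)·(1−x1)·x2·1{x1≤1, x2≥0} − B12Y·(z2/z1)·x1·(1−x2)·1{x1≥0, x2≤1} − (2/z1)·(c1X − c1Y)·x1·(1−x1)·1{x1∈[0,1]} + (β1X/z1)·(1−x1) − (β1Y/z1)·x1, and b2(x1,x2) = (B22X − B22Y)·x2·(1−x2)·1{x2∈[0,1]} + B21X·(z1/z2)·x1·(1−x2)·1{x1≥0, x2≤1} − B21Y·(z1/z2)·x2·(1−x1)·1{x1≤1, x2≥0} − (2/z2)·(c2X − c2Y)·x2·(1−x2)·1{x2∈[0,1]}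 + (β2X/z2)·(1−x2) − (β2Y/z2)·x2. Then for every (x1,x2) ∈ ℝ²: if x1 > 1 then b1(x1,x2) ≤ 0; if x1 < 0 then b1(x1,x2) ≥ 0; if x2 > 1 then b2(x1,x2) ≤ 0; and if x2 < 0 then b2(x1,x2) ≥ 0. -/
/-- Sign conditions at the boundary of `[0,1]²` for the drift coefficients
`b1`, `b2` of the SDE defining the asymmetric two-island frequency process: `b1 ≤ 0`
where `x1 > 1`, `b1 ≥ 0` where `x1 < 0`, `b2 ≤ 0` where `x2 > 1`, and `b2 ≥ 0` where
`x2 < 0`. These are the key estimates showing solutions stay in `[0,1]²`. -/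
theorem stmt_16 (B11X B11Y c1X c1Y c2X c2Y B22X B22Y : ℝ)
    (B12X B12Y B21X B21Y β1X β1Y β2X β2Y : ℝ)
    (hB12X : 0 ≤ B12X) (hB12Y : 0 ≤ B12Y) (hB21X : 0 ≤ B21X) (hB21Y : 0 ≤ B21Y)
    (hβ1X : 0 ≤ β1X) (hβ1Y : 0 ≤ β1Y) (hβ2X : 0 ≤ β2X) (hβ2Y : 0 ≤ β2Y)
    (z1 z2 : ℝ) (hz1 : 0 < z1) (hz2 : 0 < z2) :
    let b1 : ℝ × ℝ → ℝ := fun x =>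
      (B11X - B11Y) * x.1 * (1 - x.1) * (if 0 ≤ x.1 ∧ x.1 ≤ 1 then (1:ℝ) else 0)
      + B12X * (z2 / z1) * (1 - x.1) * x.2 * (if x.1 ≤ 1 ∧ 0 ≤ x.2 then (1:ℝ) else 0)
      - B12Y * (z2 / z1) * x.1 * (1 - x.2) * (if 0 ≤ x.1 ∧ x.2 ≤ 1 then (1:ℝ) else 0)
      - (2 / z1) * (c1X - c1Y) * x.1 * (1 - x.1) * (if 0 ≤ x.1 ∧ x.1 ≤ 1 then (1:ℝ) else 0)
      + (β1X / z1) * (1 - x.1) - (β1Y / z1) * x.1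
    let b2 : ℝ × ℝ → ℝ := fun x =>
      (B22X - B22Y) * x.2 * (1 - x.2) * (if 0 ≤ x.2 ∧ x.2 ≤ 1 then (1:ℝ) else 0)
      + B21X * (z1 / z2) * x.1 * (1 - x.2) * (if 0 ≤ x.1 ∧ x.2 ≤ 1 then (1:ℝ) else 0)
      - B21Y * (z1 / z2) * x.2 * (1 - x.1) * (if x.1 ≤ 1 ∧ 0 ≤ x.2 then (1:ℝ) else 0)
      - (2 / z2) * (c2X - c2Y) * x.2 * (1 - x.2) * (if 0 ≤ x.2 ∧ x.2 ≤ 1 then (1:ℝ) else 0)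
      + (β2X / z2) * (1 - x.2) - (β2Y / z2) * x.2
    ∀ x : ℝ × ℝ,
      (1 < x.1 → b1 x ≤ 0) ∧ (x.1 < 0 → 0 ≤ b1 x) ∧
      (1 < x.2 → b2 x ≤ 0) ∧ (x.2 < 0 → 0 ≤ b2 x) := by

  intro b1 b2 x
  obtain ⟨x1, x2⟩ := x
  simp only [b1, b2]
  refine ⟨fun h => ?_, fun h => ?_, fun h => ?_, fun h => ?_⟩
  · have e1 : ¬(0 ≤ x1 ∧ x1 ≤ 1) := fun h' => absurd h (not_lt.2 h'.2)
    have e2 : ¬(x1 ≤ 1 ∧ 0 ≤ x2) := fun h' => absurd h (not_lt.2 h'.1)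
    simp only [if_neg e1, if_neg e2]
    split_ifs with h3
    · nlinarith [mul_nonneg (mul_nonneg (mul_nonneg hB12Y (div_nonneg hz2.le hz1.le))
          (by linarith : (0:ℝ) ≤ x1)) (by linarith [h3.2] : (0:ℝ) ≤ 1 - x2),
        mul_nonneg (div_nonneg hβ1X hz1.le) (by linarith : (0:ℝ) ≤ x1 - 1),
        mul_nonneg (div_nonneg hβ1Y hz1.le) (by linarith : (0:ℝ) ≤ x1)]
    · nlinarith [mul_nonneg (div_nonneg hβ1X hz1.le) (by linarith : (0:ℝ) ≤ x1 - 1),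
        mul_nonneg (div_nonneg hβ1Y hz1.le) (by linarith : (0:ℝ) ≤ x1)]
  · have e1 : ¬(0 ≤ x1 ∧ x1 ≤ 1) := fun h' => absurd h (not_lt.2 h'.1)
    have e3 : ¬(0 ≤ x1 ∧ x2 ≤ 1) := fun h' => absurd h (not_lt.2 h'.1)
    simp only [if_neg e1, if_neg e3]
    split_ifs with h2
    · nlinarith [mul_nonneg (mul_nonneg (mul_nonneg hB12X (div_nonneg hz2.le hz1.le))
          (by linarith : (0:ℝ) ≤ 1 - x1)) h2.2,
        mul_nonneg (div_nonneg hβ1X hz1.le) (by linarith : (0:ℝ) ≤ 1 - x1),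
        mul_nonneg (div_nonneg hβ1Y hz1.le) (by linarith : (0:ℝ) ≤ -x1)]
    · nlinarith [mul_nonneg (div_nonneg hβ1X hz1.le) (by linarith : (0:ℝ) ≤ 1 - x1),
        mul_nonneg (div_nonneg hβ1Y hz1.le) (by linarith : (0:ℝ) ≤ -x1)]
  · have e1 : ¬(0 ≤ x2 ∧ x2 ≤ 1) := fun h' => absurd h (not_lt.2 h'.2)
    have e2 : ¬(0 ≤ x1 ∧ x2 ≤ 1) := fun h' => absurd h (not_lt.2 h'.2)
    simp only [if_neg e1, if_neg e2]
    split_ifs with h3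
    · nlinarith [mul_nonneg (mul_nonneg (mul_nonneg hB21Y (div_nonneg hz1.le hz2.le))
          (by linarith : (0:ℝ) ≤ x2)) (by linarith [h3.1] : (0:ℝ) ≤ 1 - x1),
        mul_nonneg (div_nonneg hβ2X hz2.le) (by linarith : (0:ℝ) ≤ x2 - 1),
        mul_nonneg (div_nonneg hβ2Y hz2.le) (by linarith : (0:ℝ) ≤ x2)]
    · nlinarith [mul_nonneg (div_nonneg hβ2X hz2.le) (by linarith : (0:ℝ) ≤ x2 - 1),
        mul_nonneg (div_nonneg hβ2Y hz2.le) (by linarith : (0:ℝ) ≤ x2)]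
  · have e1 : ¬(0 ≤ x2 ∧ x2 ≤ 1) := fun h' => absurd h (not_lt.2 h'.1)
    have e3 : ¬(x1 ≤ 1 ∧ 0 ≤ x2) := fun h' => absurd h (not_lt.2 h'.2)
    simp only [if_neg e1, if_neg e3]
    split_ifs with h2
    · nlinarith [mul_nonneg (mul_nonneg (mul_nonneg hB21X (div_nonneg hz1.le hz2.le))
          h2.1) (by linarith : (0:ℝ) ≤ 1 - x2),
        mul_nonneg (div_nonneg hβ2X hz2.le) (by linarith : (0:ℝ) ≤ 1 - x2),
        mul_nonneg (div_nonneg hβ2Y hz2.le) (by linarith : (0:ℝ) ≤ -x2)]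
    · nlinarith [mul_nonneg (div_nonneg hβ2X hz2.le) (by linarith : (0:ℝ) ≤ 1 - x2),
        mul_nonneg (div_nonneg hβ2Y hz2.le) (by linarith : (0:ℝ) ≤ -x2)]
end

section
/- Let z1, z2 be nonzero real numbers, let B11X, B11Y, B12X, B12Y, B21X, B21Y, B22X, B22Y, β1X, β1Y, β2X, β2Y, c1X, c1Y, c2X, c2Y be real numbers, and let n ≥ 1 and m ≥ 1 be natural numbers. Then for all real r1, r2 the following polynomial identity holds: n·r1^{n−1}·r2^m·(1−r1)·(B11X·r1 + B12X·(z2/z1)·r2 + β1X/z1) − n·r1^n·r2^m·(B11Y·(1−r1) + B12Y·(z2/z1)·(1−r2) + β1Y/z1) + m·r1^n·r2^{m−1}·(1−r2)·(B21X·(z1/z2)·r1 + B22X·r2 + β2X/z2) − m·r1^n·r2^m·(B21Y·(z1/z2)·(1−r1) + B22Y·(1−r2) + β2Y/z2) + (c1X/z1)·((1−r1)²·n·(n−1)·r1^{n−1}·r2^m − 2·(1−r1)·n·r1^n·r2^m) + (c2X/z2)·((1−r2)²·m·(m−1)·r1^n·r2^{m−1} − 2·(1−r2)·m·r1^n·r2^m)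 + (c1Y/z1)·((1−r1)·n·(n−1)·r1^n·r2^m + 2·(1−r1)·n·r1^n·r2^m) + (c2Y/z2)·((1−r2)·m·(m−1)·r1^n·r2^m + 2·(1−r2)·m·r1^n·r2^m) = (r1^{n+1}·r2^m − r1^n·r2^m)·[n·(B11Y − B11X) + m·(z1/z2)·(B21Y − B21X) + (2n/z1)·(c1X − c1Y) + (n·(n−1)/z1)·(c1X − c1Y)] + (r1^n·r2^{m+1} − r1^n·r2^m)·[m·(B22Y − B22X) + n·(z2/z1)·(B12Y − B12X) + (2m/z2)·(c2X − c2Y) + (m·(m−1)/z2)·(c2X − c2Y)] + (r1^{n−1}·r2^m − r1^n·r2^m)·[n·β1X/z1 + n·(n−1)·c1X/z1] + (r1^n·r2^{m−1} − r1^n·r2^m)·[m·β2X/z2 + m·(m−1)·c2X/z2] + (r1^{n−1}·r2^{m+1} − r1^n·r2^m)·n·B12X·(z2/z1) + (r1^{n+1}·r2^{m−1} − r1^n·r2^m)·m·B21X·(z1/z2) − r1^n·r2^m·[n·β1Y/z1 + m·β2Y/z2]. -/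
/-- The polynomial identity at the core of the moment duality theorem:
the generator of the asymmetric two-island frequency process applied to the monomial
`r1^n·r2^m` (left-hand side, with partial derivatives evaluated explicitly) equals the
generator of the dual continuous-time Markov chain applied to the same monomial
(right-hand side). -/
theorem stmt_19 (z1 z2 : ℝ) (hz1 : z1 ≠ 0) (hz2 : z2 ≠ 0)
    (B11X B11Y B12X B12Y B21X B21Y B22X B22Y : ℝ)
    (β1X β1Y β2X β2Y c1X c1Y c2X c2Y : ℝ)
    (n m : ℕ) (hn : 1 ≤ n) (hm : 1 ≤ m) :
    ∀ r1 r2 : ℝ,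
      (n : ℝ) * r1 ^ (n - 1) * r2 ^ m * (1 - r1) *
          (B11X * r1 + B12X * (z2 / z1) * r2 + β1X / z1)
      - (n : ℝ) * r1 ^ n * r2 ^ m *
          (B11Y * (1 - r1) + B12Y * (z2 / z1) * (1 - r2) + β1Y / z1)
      + (m : ℝ) * r1 ^ n * r2 ^ (m - 1) * (1 - r2) *
          (B21X * (z1 / z2) * r1 + B22X * r2 + β2X / z2)
      - (m : ℝ) * r1 ^ n * r2 ^ m *
          (B21Y * (z1 / z2) * (1 - r1) + B22Y * (1 - r2) + β2Y / z2)
      + (c1X / z1) * ((1 - r1) ^ 2 * ((n : ℝ) * ((n : ℝ) - 1)) * r1 ^ (n - 1) * r2 ^ m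
          - 2 * (1 - r1) * (n : ℝ) * r1 ^ n * r2 ^ m)
      + (c2X / z2) * ((1 - r2) ^ 2 * ((m : ℝ) * ((m : ℝ) - 1)) * r1 ^ n * r2 ^ (m - 1)
          - 2 * (1 - r2) * (m : ℝ) * r1 ^ n * r2 ^ m)
      + (c1Y / z1) * ((1 - r1) * ((n : ℝ) * ((n : ℝ) - 1)) * r1 ^ n * r2 ^ m
          + 2 * (1 - r1) * (n : ℝ) * r1 ^ n * r2 ^ m)
      + (c2Y / z2) * ((1 - r2) * ((m : ℝ) * ((m : ℝ) - 1)) * r1 ^ n * r2 ^ m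
          + 2 * (1 - r2) * (m : ℝ) * r1 ^ n * r2 ^ m)
      =
      (r1 ^ (n + 1) * r2 ^ m - r1 ^ n * r2 ^ m) *
          ((n : ℝ) * (B11Y - B11X) + (m : ℝ) * (z1 / z2) * (B21Y - B21X)
            + (2 * (n : ℝ) / z1) * (c1X - c1Y)
            + ((n : ℝ) * ((n : ℝ) - 1) / z1) * (c1X - c1Y))
      + (r1 ^ n * r2 ^ (m + 1) - r1 ^ n * r2 ^ m) *
          ((m : ℝ) * (B22Y - B22X) + (n : ℝ) * (z2 / z1) * (B12Y - B12X)
            + (2 * (m : ℝ) / z2) * (c2X - c2Y)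
            + ((m : ℝ) * ((m : ℝ) - 1) / z2) * (c2X - c2Y))
      + (r1 ^ (n - 1) * r2 ^ m - r1 ^ n * r2 ^ m) *
          ((n : ℝ) * β1X / z1 + (n : ℝ) * ((n : ℝ) - 1) * c1X / z1)
      + (r1 ^ n * r2 ^ (m - 1) - r1 ^ n * r2 ^ m) *
          ((m : ℝ) * β2X / z2 + (m : ℝ) * ((m : ℝ) - 1) * c2X / z2)
      + (r1 ^ (n - 1) * r2 ^ (m + 1) - r1 ^ n * r2 ^ m) * ((n : ℝ) * B12X * (z2 / z1))
      + (r1 ^ (n + 1) * r2 ^ (m - 1) - r1 ^ n * r2 ^ m) * ((m : ℝ) * B21X * (z1 / z2))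
      - r1 ^ n * r2 ^ m * ((n : ℝ) * β1Y / z1 + (m : ℝ) * β2Y / z2) := by
  obtain ⟨a, rfl⟩ : ∃ a, n = a + 1 := ⟨n - 1, (Nat.succ_pred_eq_of_pos hn).symm⟩
  obtain ⟨b, rfl⟩ : ∃ b, m = b + 1 := ⟨m - 1, (Nat.succ_pred_eq_of_pos hm).symm⟩
  intro r1 r2
  simp only [Nat.add_sub_cancel, pow_succ]
  push_cast
  field_simp
  ring
end
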